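/- Let G be a connected plane graph with minimum degree at least 3 that contains no cycle of length 4, no cycle of length 7, no cycle of length 9, and no 5-cycle normally adjacent to a 3-cycle. Then every face of G that is adjacent to a 3-face has boundary walk of length at least 10. -/

import Mathlib

namespace Paper

open SimpleGraph

variable {V : Type*}

/-- The fixed-point-free involution on darts reversing each dart. -/
def dartFlip (G : SimpleGraph V) : Equiv.Perm G.Dart :=
  ⟨SimpleGraph.Dart.symm, SimpleGraph.Dart.symm,
    fun d => SimpleGraph.Dart.symm_symm d, fun d => SimpleGraph.Dart.symm_symm d⟩

/-- A combinatorial embedding (rotation system) of a simple graph: a permutation of the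
darts whose cycles are exactly the sets of darts emanating from a common vertex. -/
structure PlaneEmbedding (G : SimpleGraph V) where
  rot : Equiv.Perm G.Dart
  fst_rot : ∀ d : G.Dart, (rot d).fst = d.fst
  rot_cyclic : ∀ d e : G.Dart, d.fst = e.fst → rot.SameCycle d e

/-- The face permutation of a combinatorial embedding; its orbits are the (boundary walks
of the) faces of the embedding. -/
def PlaneEmbedding.facePerm {G : SimpleGraph V} (E : PlaneEmbedding G) : Equiv.Perm G.Dart :=
  E.rot * dartFlip G

/-- The face (as its set of boundary darts, i.e. the orbit of the face permutation)
containing a given dart. -/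
def faceOf {G : SimpleGraph V} (E : PlaneEmbedding G) (d : G.Dart) : Set G.Dart :=
  {e | E.facePerm.SameCycle d e}

/-- The length of the boundary walk of the face containing a given dart; a `k`-face is a
face whose boundary walk has length `k`, i.e. whose dart-orbit has size `k`. -/
noncomputable def faceSize {G : SimpleGraph V} (E : PlaneEmbedding G) (d : G.Dart) : ℕ :=
  (faceOf E d).ncard

/-- The number of faces of the embedding lying in a given connected component. -/
noncomputable def componentFaceCount {G : SimpleGraph V} (E : PlaneEmbedding G)
    (c : G.ConnectedComponent) : ℕ :=
  Nat.card (Quotient (Setoid.comap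
    (Subtype.val : {d : G.Dart // G.connectedComponentMk d.fst = c} → G.Dart)
    (Equiv.Perm.SameCycle.setoid E.facePerm)))

/-- The embedding is plane (genus zero): Euler's formula `V - E + F = 2` holds on each
connected component containing an edge (stated as `2V + 2F = #darts + 4`, using that the
number of darts is twice the number of edges). -/
def PlaneEmbedding.IsPlane {G : SimpleGraph V} (E : PlaneEmbedding G) : Prop :=
  ∀ c : G.ConnectedComponent, (∃ d : G.Dart, G.connectedComponentMk d.fst = c) →
    2 * {v : V | G.connectedComponentMk v = c}.ncard + 2 * componentFaceCount E c
      = {d : G.Dart | G.connectedComponentMk d.fst = c}.ncard + 4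

/-- `G` is a planar graph: it admits a plane (genus-zero) combinatorial embedding. -/
def IsPlanar (G : SimpleGraph V) : Prop :=
  ∃ E : PlaneEmbedding G, E.IsPlane

/-- `G` has no cycle of length `n`. -/
def NoCycleLen (G : SimpleGraph V) (n : ℕ) : Prop :=
  ∀ (v : V) (c : G.Walk v v), c.IsCycle → c.length ≠ n

/-- Two cycles (given as closed walks) are normally adjacent: their intersection is
isomorphic to `K₂`, i.e. they share exactly one edge together with its two endpoints. -/
def NormAdjWalks (G : SimpleGraph V) {a b : V} (c₁ : G.Walk a a) (c₂ : G.Walk b b) : Prop :=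
  ∃ x y : V, x ≠ y ∧ s(x, y) ∈ c₁.edges ∧ s(x, y) ∈ c₂.edges ∧
    (∀ z : V, (z ∈ c₁.support ∧ z ∈ c₂.support) ↔ (z = x ∨ z = y))

/-- `G` has no `5`-cycle normally adjacent to a `3`-cycle. -/
def No5CycleNormAdj3 (G : SimpleGraph V) : Prop :=
  ∀ (a b : V) (c₁ : G.Walk a a) (c₂ : G.Walk b b),
    c₁.IsCycle → c₁.length = 5 → c₂.IsCycle → c₂.length = 3 →
      ¬ NormAdjWalks G c₁ c₂

/-- `d` lists the boundary darts of a face in order, and this boundary is the closed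
walk `v 0, v 1, …, v (n-1), v 0`. -/
def FaceTraversal {G : SimpleGraph V} (E : PlaneEmbedding G) {n : ℕ}
    (v : ZMod n → V) (d : ZMod n → G.Dart) : Prop :=
  (∀ i, (d i).toProd = (v i, v (i + 1))) ∧ ∀ i, E.facePerm (d i) = d (i + 1)

/-- The cycle `v 0, v 1, …, v (n-1), v 0` (with distinct vertices) bounds a face of the
embedding (traversed in one of the two possible directions). -/
def CycleBoundsFace {G : SimpleGraph V} (E : PlaneEmbedding G) {n : ℕ}
    (v : ZMod n → V) : Prop :=
  Function.Injective v ∧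
    ((∃ d, FaceTraversal E v d) ∨ (∃ d, FaceTraversal E (fun i => v (-i)) d))

/-- The `i`-th vertex of the boundary walk of the face containing the dart `d0`. -/
def boundaryVert {G : SimpleGraph V} (E : PlaneEmbedding G) (d0 : G.Dart) (i : ℕ) : V :=
  ((E.facePerm ^ i) d0).fst

/-- The faces containing the darts `d1`, `d2` are adjacent: their boundaries share at
least one edge. -/
def FacesAdjacent {G : SimpleGraph V} (E : PlaneEmbedding G) (d1 d2 : G.Dart) : Prop :=
  ∃ e1 e2 : G.Dart, E.facePerm.SameCycle d1 e1 ∧ E.facePerm.SameCycle d2 e2 ∧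
    e1.edge = e2.edge

/-- The set of vertices on the boundary of the face containing the dart `d`. -/
def faceVerts {G : SimpleGraph V} (E : PlaneEmbedding G) (d : G.Dart) : Set V :=
  {x | ∃ e : G.Dart, E.facePerm.SameCycle d e ∧ e.fst = x}

/-- The set of edges on the boundary of the face containing the dart `d`. -/
def faceEdges {G : SimpleGraph V} (E : PlaneEmbedding G) (d : G.Dart) : Set (Sym2 V) :=
  {s | ∃ e : G.Dart, E.facePerm.SameCycle d e ∧ e.edge = s}

section Configs

variable [Fintype V]

/-- Configuration (1): a `10`-cycle bounding a face together with a `3`-cycle bounding a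
face, normally adjacent to it along one edge, all eleven vertices having degree `3`. -/
def Config1 (G : SimpleGraph V) [DecidableRel G.Adj] (E : PlaneEmbedding G) : Prop :=
  ∃ (v : ZMod 10 → V) (w : ZMod 3 → V) (u : V),
    CycleBoundsFace E v ∧ CycleBoundsFace E w ∧
    ({w 0, w 1, w 2} : Set V) = {v 0, v 1, u} ∧ u ∉ Set.range v ∧
    (∀ i, G.degree (v i) = 3) ∧ G.degree u = 3

/-- Configuration (2): two vertex-disjoint `10`-cycles `x₁…x₁₀` and `y₁…y₁₀` (indexed here
from `0`), each bounding a face, with edges `x₃y₃` and `x₁₀y₁₀`; all `xᵢ` have degree `3`,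
`y₃` and `y₁₀` have degree `4`, the other `yᵢ` have degree `3`. -/
def Config2 (G : SimpleGraph V) [DecidableRel G.Adj] (E : PlaneEmbedding G) : Prop :=
  ∃ x y : ZMod 10 → V,
    CycleBoundsFace E x ∧ CycleBoundsFace E y ∧
    Set.range x ∩ Set.range y = ∅ ∧
    G.Adj (x 2) (y 2) ∧ G.Adj (x 9) (y 9) ∧
    (∀ i, G.degree (x i) = 3) ∧
    G.degree (y 2) = 4 ∧ G.degree (y 9) = 4 ∧
    (∀ i, i ≠ 2 → i ≠ 9 → G.degree (y i) = 3)

/-- Configuration (3): an `8`-cycle bounding a face and a `5`-cycle bounding a face that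
are normally adjacent (sharing exactly one edge and its endpoints), all eleven vertices
having degree `3`. -/
def Config3 (G : SimpleGraph V) [DecidableRel G.Adj] (E : PlaneEmbedding G) : Prop :=
  ∃ (a : ZMod 8 → V) (b : ZMod 5 → V),
    CycleBoundsFace E a ∧ CycleBoundsFace E b ∧
    Set.range a ∩ Set.range b = {a 0, a 1} ∧
    (∃ j : ZMod 5, (b j = a 0 ∧ b (j + 1) = a 1) ∨ (b j = a 1 ∧ b (j + 1) = a 0)) ∧
    (∀ i, G.degree (a i) = 3) ∧ (∀ j, G.degree (b j) = 3)

end Configs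

open Classical in
/-- The function resulting from the operation `Delete_[u](G, f)`: every neighbour of `u`
loses one unit. -/
noncomputable def deleteFun (G : SimpleGraph V) (u : V) (f : V → ℤ) : V → ℤ :=
  fun v => if G.Adj u v then f v - 1 else f v

open Classical in
/-- The function resulting from the operation `DeleteSave_[u; w](G, f)`: every neighbour
of `u` except `w` loses one unit. -/
noncomputable def deleteSaveFun (G : SimpleGraph V) (u w : V) (f : V → ℤ) : V → ℤ :=
  fun v => if G.Adj u v ∧ v ≠ w then f v - 1 else f v

/-- All vertices of the subgraph of `G` induced on `S` can be removed by a sequence of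
legal applications of the `Delete` and `DeleteSave` operations, starting from the value
function `f`. -/
inductive WeaklyReducible (G : SimpleGraph V) : Set V → (V → ℤ) → Prop
  | empty (f : V → ℤ) : WeaklyReducible G ∅ f
  | delete (S : Set V) (f : V → ℤ) (u : V) (hu : u ∈ S)
      (hnn : ∀ v ∈ S \ {u}, 0 ≤ deleteFun G u f v)
      (h : WeaklyReducible G (S \ {u}) (deleteFun G u f)) : WeaklyReducible G S f
  | deleteSave (S : Set V) (f : V → ℤ) (u w : V) (hu : u ∈ S) (hw : w ∈ S \ {u})
      (hadj : G.Adj u w) (hlt : f w < f u)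
      (hnn : ∀ v ∈ S \ {u}, 0 ≤ deleteSaveFun G u w f v)
      (h : WeaklyReducible G (S \ {u}) (deleteSaveFun G u w f)) : WeaklyReducible G S f

/-- `G` is weakly `d`-degenerate: all its vertices can be removed by a sequence of legal
applications of the `Delete` and `DeleteSave` operations, starting from the constant
function of value `d`. -/
def WeaklyDegenerate (G : SimpleGraph V) (d : ℤ) : Prop :=
  WeaklyReducible G Set.univ (fun _ => d)

/-- The canonical cover of `G` with `s = 2`: two disjoint copies of `G`, on vertex set
`V × Fin 2`, with `(u, i)` adjacent to `(v, j)` iff `uv ∈ E(G)` and `i = j`. -/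
def canonicalCover2 (G : SimpleGraph V) : SimpleGraph (V × Fin 2) where
  Adj a b := G.Adj a.1 b.1 ∧ a.2 = b.2
  symm := ⟨fun _ _ h => ⟨h.1.symm, h.2.symm⟩⟩
  loopless := ⟨fun a h => h.1.ne rfl⟩

/-- `T` is a strictly `f`-degenerate transversal-candidate set: every nonempty subgraph
`K` of the induced subgraph `H[T]` has a vertex `x` with `deg_K x < f x`. -/
def StrictlyFDegenerateOn {W : Type*} (H : SimpleGraph W) (f : W → ℕ) (T : Set W) : Prop :=
  ∀ K : H.Subgraph, K.verts ⊆ T → K.verts.Nonempty →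
    ∃ x ∈ K.verts, Nat.card (K.neighborSet x) < f x

end Paper

open SimpleGraph

/-!
Let `a, b, c` be the darts of a triangular face with corners `x, y, z`, and suppose the face
across the edge `xy` has length `m ≤ 9`. Its boundary minus the dart `yx` is a walk from `x`
to `y` of length at most 8 that avoids the edge `xy`. Shortcut it to a path and close the path
with edges of the triangle: the absence of 4-, 7- and 9-cycles and of 5-cycles normally adjacent
to a triangle forces the path to be `x z y`. So that face also contains the darts `xz` and `zy`.
If they occur in the cyclic order `yx, zy, xz`, the stretch from `x` to `z` is again such a
short walk, now avoiding `xz`, and would have to use the edge `xy`. In the order `yx, xz, zy`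
each of the three darts leaves the head of the previous one; with minimum degree 3 that needs at
least four steps each time (one step would make the rotation swap two darts at a vertex, two a
loop, three a spur), so `m ≥ 12`.
-/

namespace SimpleGraph.Walk

open Paper

variable {V : Type*} {G : SimpleGraph V} {u v w : V}

lemma mem_edges_of_length_eq_one : ∀ {p : G.Walk u v}, p.length = 1 → s(u, v) ∈ p.edges
  | cons _ nil, _ => List.mem_singleton_self _
  | cons _ (cons _ _), h => by simp at h

lemma IsPath.cons_isCycle_of_two_le {p : G.Walk u v} (hp : p.IsPath) (h : G.Adj v u)
    (hlen : 2 ≤ p.length) : (cons h p).IsCycle := by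
  refine (cons_isCycle_iff p h).2 ⟨hp, fun he => ?_⟩
  have := hp.length_eq_one_of_mem_edges (Sym2.eq_swap ▸ he)
  omega

lemma triangle_isCycle (huv : G.Adj u v) (hvw : G.Adj v w) (hwu : G.Adj w u) :
    (cons huv (cons hvw (cons hwu nil))).IsCycle := by
  simp [cons_isCycle_iff, cons_isPath_iff, huv.ne, hvw.ne, hwu.ne, huv.ne', hwu.ne']

lemma normAdjWalks_cons_triangle {p : G.Walk u v} (hw : w ∉ p.support) (huv : G.Adj u v)
    (hvw : G.Adj v w) (hwu : G.Adj w u) :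
    NormAdjWalks G (cons huv.symm p) (cons huv (cons hvw (cons hwu nil))) := by
  refine ⟨u, v, huv.ne, by simp [Sym2.eq_swap], by simp, fun z => ?_⟩
  simp only [support_cons, support_nil, List.mem_cons, List.not_mem_nil, or_false]
  constructor
  · rintro ⟨h, rfl | rfl | rfl | rfl⟩ <;> simp_all [hvw.ne']
  · rintro (rfl | rfl) <;> simp

section ForbiddenCycles

variable (h4 : NoCycleLen G 4) (h7 : NoCycleLen G 7) (h9 : NoCycleLen G 9)
  (h53 : No5CycleNormAdj3 G)
include h4 h7 h9 h53

lemma IsPath.length_eq_one_of_triangle {p : G.Walk u v} (hp : p.IsPath) (huv : G.Adj u v)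
    (hvw : G.Adj v w) (hwu : G.Adj w u) (hw : w ∉ p.support) (h8 : p.length ≤ 8) :
    p.length = 1 := by
  by_contra h1
  have h2 : 2 ≤ p.length := by
    have : p.length ≠ 0 := fun h0 => huv.ne (p.eq_of_length_eq_zero h0)
    omega
  -- Closing `p` by `vu` and by `vwu` gives cycles of lengths `n + 1` and `n + 2`; both avoid
  -- 4, 7 and 9 only for `n = 4`, and then the first is a 5-cycle normally adjacent to `uvw`.
  have hC := hp.cons_isCycle_of_two_le huv.symm h2
  have hC' := (hp.concat hw hvw).cons_isCycle_of_two_le hwu (by simp; omega)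
  have := h4 _ _ hC; have := h7 _ _ hC; have := h9 _ _ hC
  have := h4 _ _ hC'; have := h7 _ _ hC'; have := h9 _ _ hC'
  simp only [length_cons, length_concat] at *
  exact h53 _ _ _ _ hC (by simp; omega) (triangle_isCycle huv hvw hwu) rfl
    (normAdjWalks_cons_triangle hw huv hvw hwu)

lemma IsPath.mem_edges_of_triangle {p : G.Walk u v} (hp : p.IsPath) (huv : G.Adj u v)
    (hvw : G.Adj v w) (hwu : G.Adj w u) (hpe : s(u, v) ∉ p.edges) (h8 : p.length ≤ 8) :
    s(v, w) ∈ p.edges ∧ s(w, u) ∈ p.edges := by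
  by_cases hw : w ∈ p.support
  · obtain ⟨p₁, p₂, hp₁, hp₂, rfl⟩ := hp.mem_support_iff_exists_append.1 hw
    have hv₁ : v ∉ p₁.support := fun hv =>
      hp.ne_of_mem_support_of_append hvw.ne hv p₂.end_mem_support rfl
    have hu₂ : u ∉ p₂.support := fun hu =>
      hp.ne_of_mem_support_of_append hwu.ne' p₁.start_mem_support hu rfl
    rw [length_append] at h8
    have h₁ := hp₁.length_eq_one_of_triangle h4 h7 h9 h53 hwu.symm hvw.symm huv.symm hv₁
      (by omega)
    have h₂ := hp₂.length_eq_one_of_triangle h4 h7 h9 h53 hvw.symm huv.symm hwu.symm hu₂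
      (by omega)
    rw [edges_append, List.mem_append, List.mem_append]
    exact ⟨Or.inr (Sym2.eq_swap ▸ mem_edges_of_length_eq_one h₂),
      Or.inl (Sym2.eq_swap ▸ mem_edges_of_length_eq_one h₁)⟩
  · exact absurd (mem_edges_of_length_eq_one
      (hp.length_eq_one_of_triangle h4 h7 h9 h53 huv hvw hwu hw h8)) hpe

lemma mem_edges_of_triangle [DecidableEq V] (p : G.Walk u v) (huv : G.Adj u v)
    (hvw : G.Adj v w) (hwu : G.Adj w u) (hpe : s(u, v) ∉ p.edges) (h8 : p.length ≤ 8) :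
    s(v, w) ∈ p.edges ∧ s(w, u) ∈ p.edges :=
  have hsub := p.edges_bypass_subset_edges
  (p.bypass_isPath.mem_edges_of_triangle h4 h7 h9 h53 huv hvw hwu (fun h => hpe (hsub h))
    (p.length_bypass_le_length.trans h8)).imp (@hsub _) (@hsub _)

end ForbiddenCycles

end SimpleGraph.Walk

namespace Equiv.Perm

open Function

variable {α : Type*} (f : Perm α) (x : α)

lemma minimalPeriod_pos [Finite α] : 0 < minimalPeriod f x :=
  IsPeriodicPt.minimalPeriod_pos (orderOf_pos f) <| by
    rw [IsPeriodicPt, IsFixedPt, iterate_eq_pow, pow_orderOf_eq_one, one_apply]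

lemma pow_minimalPeriod_apply : (f ^ minimalPeriod f x) x = x := by
  rw [← iterate_eq_pow]
  exact iterate_minimalPeriod

variable {f x}

lemma eq_of_pow_apply_eq {i j : ℕ} (hi : i < minimalPeriod f x) (hj : j < minimalPeriod f x)
    (h : (f ^ i) x = (f ^ j) x) : i = j :=
  iterate_injOn_Iio_minimalPeriod hi hj (by simpa only [iterate_eq_pow] using h)

lemma sameCycle_iff_exists_pow_lt_minimalPeriod [Finite α] {y : α} :
    f.SameCycle x y ↔ ∃ i < minimalPeriod f x, (f ^ i) x = y := by
  refine ⟨fun h => ?_, fun ⟨i, _, hi⟩ => ⟨i, by rw [zpow_natCast, hi]⟩⟩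
  obtain ⟨i, -, rfl⟩ := h.exists_pow_eq'
  refine ⟨i % minimalPeriod f x, Nat.mod_lt _ (minimalPeriod_pos f x), ?_⟩
  simp only [← iterate_eq_pow, iterate_mod_minimalPeriod_eq]

variable (f x)

lemma ncard_setOf_sameCycle [Finite α] : {y | f.SameCycle x y}.ncard = minimalPeriod f x := by
  have : {y | f.SameCycle x y} = (fun i => (f ^ i) x) '' Set.Iio (minimalPeriod f x) := by
    ext y
    simp [sameCycle_iff_exists_pow_lt_minimalPeriod]
  have hinj : (Set.Iio (minimalPeriod f x)).InjOn (fun i => (f ^ i) x) :=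
    fun i hi j hj => eq_of_pow_apply_eq hi hj
  rw [this, hinj.ncard_image]
  simp

end Equiv.Perm

namespace Paper

open SimpleGraph Walk Function

variable {V : Type*} {G : SimpleGraph V} (E : PlaneEmbedding G)

namespace PlaneEmbedding

lemma facePerm_apply (d : G.Dart) : E.facePerm d = E.rot d.symm := rfl

lemma fst_facePerm (d : G.Dart) : (E.facePerm d).fst = d.snd := E.fst_rot d.symm

lemma fst_eq_snd_of_facePerm_eq {a b : G.Dart} (h : E.facePerm a = b) : b.fst = a.snd :=
  h ▸ E.fst_facePerm a

lemma adj_of_facePerm_eq {a b : G.Dart} (h : E.facePerm a = b) : G.Adj a.fst b.fst :=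
  h ▸ E.fst_facePerm a ▸ a.adj

lemma edge_eq_of_facePerm_eq {a b : G.Dart} (h : E.facePerm a = b) :
    a.edge = s(a.fst, b.fst) := by
  rw [← h, fst_facePerm]
  rfl

lemma facePerm_ne_self (d : G.Dart) : E.facePerm d ≠ d :=
  fun h => d.adj.ne (by rw [← E.fst_facePerm d, h])

lemma facePerm_pow_succ_apply (d : G.Dart) (n : ℕ) :
    (E.facePerm ^ (n + 1)) d = (E.facePerm ^ n) (E.facePerm d) := by
  rw [pow_succ, Equiv.Perm.mul_apply]

def boundaryWalk : (d : G.Dart) → (n : ℕ) → G.Walk d.fst ((E.facePerm ^ n) d).fst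
  | _, 0 => nil
  | d, n + 1 => cons d.adj ((boundaryWalk (E.facePerm d) n).copy (E.fst_facePerm d)
      (by rw [facePerm_pow_succ_apply]))

lemma darts_boundaryWalk (d : G.Dart) (n : ℕ) :
    (E.boundaryWalk d n).darts = (List.range n).map fun i => (E.facePerm ^ i) d := by
  induction n generalizing d with
  | zero => rfl
  | succ n ih =>
    simp only [boundaryWalk, darts_cons, darts_copy, ih, List.range_succ_eq_map, List.map_cons,
      List.map_map, pow_zero, Equiv.Perm.one_apply]
    congr 1

lemma length_boundaryWalk (d : G.Dart) (n : ℕ) : (E.boundaryWalk d n).length = n := by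
  rw [← length_darts, darts_boundaryWalk, List.length_map, List.length_range]

lemma mem_edges_boundaryWalk {d : G.Dart} {n : ℕ} {s : Sym2 V} :
    s ∈ (E.boundaryWalk d n).edges ↔ ∃ i < n, ((E.facePerm ^ i) d).edge = s := by
  simp [edges, darts_boundaryWalk]

lemma facePerm_pow_apply_eq_symm {e t : G.Dart} (hne : ¬ E.facePerm.SameCycle e t) {i : ℕ}
    (h : ((E.facePerm ^ i) e).edge = t.edge) : (E.facePerm ^ i) e = t.symm :=
  ((dart_edge_eq_iff _ _).1 h).resolve_left fun h' => hne ⟨i, by rw [zpow_natCast, h']⟩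

lemma exists_facePerm_pow_succ_eq_symm {e t : G.Dart} (hne : ¬ E.facePerm.SameCycle e t)
    {n : ℕ} (h : t.edge ∈ (E.boundaryWalk (E.facePerm e) n).edges) :
    ∃ i < n, (E.facePerm ^ (i + 1)) e = t.symm := by
  obtain ⟨i, hi, hedge⟩ := E.mem_edges_boundaryWalk.1 h
  exact ⟨i, hi, E.facePerm_pow_apply_eq_symm hne (by rwa [facePerm_pow_succ_apply])⟩

section Degree

variable [Fintype V] [DecidableRel G.Adj]

lemma rot_rot_ne {d : G.Dart} (hdeg : 3 ≤ G.degree d.fst) : E.rot (E.rot d) ≠ d := by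
  classical
  intro h
  have horbit : ∀ n : ℕ, (E.rot ^ n) d = d ∨ (E.rot ^ n) d = E.rot d := by
    intro n
    induction n with
    | zero => exact Or.inl rfl
    | succ n ih =>
      rw [pow_succ', Equiv.Perm.mul_apply]
      rcases ih with ih | ih <;> rw [ih]
      exacts [Or.inr rfl, Or.inl h]
  have hsub : G.neighborFinset d.fst ⊆ {d.snd, (E.rot d).snd} := by
    intro w hw
    obtain ⟨n, -, hn⟩ :=
      (E.rot_cyclic d ⟨(d.fst, w), (G.mem_neighborFinset _ _).1 hw⟩ rfl).exists_pow_eq'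
    rcases horbit n with h' | h' <;> rw [h'] at hn
    · exact Finset.mem_insert.2 (Or.inl (by rw [hn]))
    · exact Finset.mem_insert_of_mem (Finset.mem_singleton.2 (by rw [hn]))
  have := (Finset.card_le_card hsub).trans Finset.card_le_two
  rw [card_neighborFinset_eq_degree] at this
  omega

lemma facePerm_symm_ne_symm {a b : G.Dart} (hdeg : 3 ≤ G.degree a.snd)
    (h : E.facePerm a = b) : E.facePerm b.symm ≠ a.symm := by
  rw [facePerm_apply, Dart.symm_symm, ← h, facePerm_apply]
  exact E.rot_rot_ne hdeg

lemma facePerm_ne_symm {d : G.Dart} (hdeg : 3 ≤ G.degree d.snd) : E.facePerm d ≠ d.symm :=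
  fun h => E.facePerm_symm_ne_symm hdeg h (by rw [Dart.symm_symm, h])

lemma four_le_of_facePerm_pow_apply (hmin : ∀ v, 3 ≤ G.degree v) {a b : G.Dart} {n : ℕ}
    (h : (E.facePerm ^ n) a = b) (hb : b.fst = a.snd) (hne : E.facePerm a ≠ b) : 4 ≤ n := by
  by_contra! hn
  interval_cases n
  · exact a.adj.ne (by simp_all)
  · exact hne (by simpa using h)
  · subst h
    simp only [pow_succ, pow_zero, one_mul, Equiv.Perm.mul_apply, fst_facePerm] at hb
    exact (E.facePerm a).adj.ne (by rw [fst_facePerm, hb])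
  · subst h
    simp only [pow_succ, pow_zero, one_mul, Equiv.Perm.mul_apply, fst_facePerm] at hb
    refine E.facePerm_ne_symm (d := E.facePerm a) (hmin _) (Dart.ext _ _ (Prod.ext ?_ ?_))
    · exact E.fst_facePerm _
    · exact hb.trans (E.fst_facePerm a).symm

end Degree

end PlaneEmbedding

open PlaneEmbedding

lemma faceSize_eq_minimalPeriod [Finite G.Dart] (d : G.Dart) :
    faceSize E d = minimalPeriod E.facePerm d :=
  Equiv.Perm.ncard_setOf_sameCycle _ _

lemma faceSize_eq_of_sameCycle {d e : G.Dart} (h : E.facePerm.SameCycle d e) :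
    faceSize E d = faceSize E e := by
  simp only [faceSize, faceOf]
  congr 1
  ext f
  exact ⟨h.symm.trans, h.trans⟩

section TriangularFace

variable {a b c : G.Dart}

lemma not_sameCycle_symm_of_triangle (hab : E.facePerm a = b) (hbc : E.facePerm b = c)
    (hsep : ¬ E.facePerm.SameCycle a a.symm) : ¬ E.facePerm.SameCycle a.symm a ∧
    ¬ E.facePerm.SameCycle a.symm b ∧ ¬ E.facePerm.SameCycle a.symm c := by
  have hb : E.facePerm.SameCycle a b := ⟨1, by rw [zpow_one, hab]⟩
  have hc : E.facePerm.SameCycle a c := ⟨2, by rw [zpow_two, Equiv.Perm.mul_apply, hab, hbc]⟩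
  exact ⟨fun h => hsep h.symm, fun h => hsep (hb.trans h.symm), fun h => hsep (hc.trans h.symm)⟩

lemma twelve_le_minimalPeriod_of_triangle [Fintype V] [DecidableRel G.Adj]
    (hmin : ∀ v, 3 ≤ G.degree v) (hab : E.facePerm a = b) (hbc : E.facePerm b = c)
    (hca : E.facePerm c = a) {j k : ℕ} (hj : (E.facePerm ^ j) a.symm = c.symm)
    (hk : (E.facePerm ^ k) a.symm = b.symm) (hjk : j < k)
    (hkm : k < minimalPeriod E.facePerm a.symm) : 12 ≤ minimalPeriod E.facePerm a.symm := by
  have h₁ := E.four_le_of_facePerm_pow_apply hmin hj (E.fst_eq_snd_of_facePerm_eq hca).symm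
    (E.facePerm_symm_ne_symm (hmin _) hca)
  have h₂ := E.four_le_of_facePerm_pow_apply hmin (n := k - j)
    (by rw [← hj, ← Equiv.Perm.mul_apply, ← pow_add, Nat.sub_add_cancel hjk.le, hk])
    (E.fst_eq_snd_of_facePerm_eq hbc).symm (E.facePerm_symm_ne_symm (hmin _) hbc)
  have h₃ := E.four_le_of_facePerm_pow_apply hmin (n := minimalPeriod E.facePerm a.symm - k)
    (by rw [← hk, ← Equiv.Perm.mul_apply, ← pow_add, Nat.sub_add_cancel hkm.le,
      Equiv.Perm.pow_minimalPeriod_apply])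
    (E.fst_eq_snd_of_facePerm_eq hab).symm (E.facePerm_symm_ne_symm (hmin _) hab)
  omega

variable (h4 : NoCycleLen G 4) (h7 : NoCycleLen G 7) (h9 : NoCycleLen G 9)
  (h53 : No5CycleNormAdj3 G)
include h4 h7 h9 h53

lemma exists_facePerm_pow_eq_symm_of_triangle [Finite G.Dart] (hab : E.facePerm a = b)
    (hbc : E.facePerm b = c) (hca : E.facePerm c = a) (hsep : ¬ E.facePerm.SameCycle a a.symm)
    (h9m : minimalPeriod E.facePerm a.symm ≤ 9) :
    ∃ j < minimalPeriod E.facePerm a.symm, ∃ k < minimalPeriod E.facePerm a.symm,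
      (E.facePerm ^ j) a.symm = c.symm ∧ (E.facePerm ^ k) a.symm = b.symm := by
  classical
  obtain ⟨hsa, hsb, hsc⟩ := not_sameCycle_symm_of_triangle E hab hbc hsep
  set m := minimalPeriod E.facePerm a.symm
  have hm : 0 < m := Equiv.Perm.minimalPeriod_pos E.facePerm a.symm
  have hstart : (E.facePerm a.symm).fst = a.fst := E.fst_facePerm a.symm
  have hend : ((E.facePerm ^ (m - 1)) (E.facePerm a.symm)).fst = b.fst := by
    rw [← facePerm_pow_succ_apply, Nat.sub_add_cancel hm, Equiv.Perm.pow_minimalPeriod_apply,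
      ← hab, fst_facePerm]
    rfl
  have hW : a.edge ∉ (E.boundaryWalk (E.facePerm a.symm) (m - 1)).edges := by
    intro h
    obtain ⟨i, hi, hi'⟩ := E.exists_facePerm_pow_succ_eq_symm hsa h
    have := Equiv.Perm.eq_of_pow_apply_eq (i := i + 1) (j := 0) (by omega) hm
      (by rw [hi', pow_zero, Equiv.Perm.one_apply])
    omega
  obtain ⟨hbW, hcW⟩ := ((E.boundaryWalk _ _).copy hstart hend).mem_edges_of_triangle
    h4 h7 h9 h53 (E.adj_of_facePerm_eq hab) (E.adj_of_facePerm_eq hbc) (E.adj_of_facePerm_eq hca)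
    (by rwa [edges_copy, ← E.edge_eq_of_facePerm_eq hab])
    (by rw [length_copy, length_boundaryWalk]; omega)
  rw [edges_copy, ← E.edge_eq_of_facePerm_eq hbc] at hbW
  rw [edges_copy, ← E.edge_eq_of_facePerm_eq hca] at hcW
  obtain ⟨k, hk, hk'⟩ := E.exists_facePerm_pow_succ_eq_symm hsb hbW
  obtain ⟨j, hj, hj'⟩ := E.exists_facePerm_pow_succ_eq_symm hsc hcW
  exact ⟨j + 1, by omega, k + 1, by omega, hj', hk'⟩

lemma lt_of_facePerm_pow_eq_symm_of_triangle [Finite G.Dart] (hab : E.facePerm a = b)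
    (hbc : E.facePerm b = c) (hca : E.facePerm c = a) (hsep : ¬ E.facePerm.SameCycle a a.symm)
    {j k : ℕ} (hj : (E.facePerm ^ j) a.symm = c.symm) (hk : (E.facePerm ^ k) a.symm = b.symm)
    (hjm : j < minimalPeriod E.facePerm a.symm) (h9m : minimalPeriod E.facePerm a.symm ≤ 9) :
    j < k := by
  classical
  obtain ⟨hsa, -, hsc⟩ := not_sameCycle_symm_of_triangle E hab hbc hsep
  have hsymm {d e : G.Dart} (h : E.facePerm d = e) : d.symm ≠ e.symm :=
    fun h' => E.facePerm_ne_self d (h.trans (Dart.symm_involutive.injective h').symm)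
  by_contra! hkj
  have hk₀ : k ≠ 0 := by
    rintro rfl
    exact hsymm hab (by rw [← hk, pow_zero, Equiv.Perm.one_apply])
  have hk₁ : k ≠ j := by
    rintro rfl
    exact hsymm hbc (hk.symm.trans hj)
  -- The stretch of the face strictly between `a.symm` and `b.symm` runs from `a.fst` to `c.fst`
  -- without the edge of `c`, so it would have to use the edge of `a`.
  have hstart : (E.facePerm a.symm).fst = a.fst := E.fst_facePerm a.symm
  have hend : ((E.facePerm ^ (k - 1)) (E.facePerm a.symm)).fst = c.fst := by
    rw [← facePerm_pow_succ_apply, Nat.sub_add_cancel (Nat.one_le_iff_ne_zero.2 hk₀), hk,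
      E.fst_eq_snd_of_facePerm_eq hbc]
    rfl
  have hW : c.edge ∉ (E.boundaryWalk (E.facePerm a.symm) (k - 1)).edges := by
    intro h
    obtain ⟨i, hi, hi'⟩ := E.exists_facePerm_pow_succ_eq_symm hsc h
    have := Equiv.Perm.eq_of_pow_apply_eq (i := i + 1) (by omega) hjm (hi'.trans hj.symm)
    omega
  obtain ⟨-, haW⟩ := ((E.boundaryWalk _ _).copy hstart hend).mem_edges_of_triangle
    h4 h7 h9 h53 (E.adj_of_facePerm_eq hca).symm (E.adj_of_facePerm_eq hbc).symm
    (E.adj_of_facePerm_eq hab).symm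
    (by rwa [edges_copy, Sym2.eq_swap, ← E.edge_eq_of_facePerm_eq hca])
    (by rw [length_copy, length_boundaryWalk]; omega)
  rw [edges_copy, Sym2.eq_swap, ← E.edge_eq_of_facePerm_eq hab] at haW
  obtain ⟨i, hi, hi'⟩ := E.exists_facePerm_pow_succ_eq_symm hsa haW
  have := Equiv.Perm.eq_of_pow_apply_eq (i := i + 1) (j := 0) (by omega)
    (Equiv.Perm.minimalPeriod_pos E.facePerm a.symm)
    (by rw [hi', pow_zero, Equiv.Perm.one_apply])
  omega

lemma ten_le_minimalPeriod_symm_of_triangle [Fintype V] [DecidableRel G.Adj]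
    (hmin : ∀ v, 3 ≤ G.degree v) (hab : E.facePerm a = b) (hbc : E.facePerm b = c)
    (hca : E.facePerm c = a) (hsep : ¬ E.facePerm.SameCycle a a.symm) :
    10 ≤ minimalPeriod E.facePerm a.symm := by
  by_contra! h
  obtain ⟨j, hj, k, hk, hjc, hkb⟩ :=
    exists_facePerm_pow_eq_symm_of_triangle E h4 h7 h9 h53 hab hbc hca hsep (by omega)
  have hjk := lt_of_facePerm_pow_eq_symm_of_triangle E h4 h7 h9 h53 hab hbc hca hsep hjc hkb hj
    (by omega)
  have := twelve_le_minimalPeriod_of_triangle E hmin hab hbc hca hjc hkb hjk hk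
  omega

end TriangularFace

end Paper

theorem statement15_general {V : Type*} [Fintype V] (G : SimpleGraph V) [DecidableRel G.Adj]
    (E : Paper.PlaneEmbedding G)
    (hmin : ∀ v : V, 3 ≤ G.degree v)
    (h4 : Paper.NoCycleLen G 4) (h7 : Paper.NoCycleLen G 7)
    (h9 : Paper.NoCycleLen G 9) (h53 : Paper.No5CycleNormAdj3 G) :
    ∀ d1 d2 : G.Dart, Paper.faceSize E d1 = 3 → ¬ E.facePerm.SameCycle d1 d2 →
      Paper.FacesAdjacent E d1 d2 → 10 ≤ Paper.faceSize E d2 := by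
  rintro d1 d2 h3 hne ⟨a, e, hda, hde, hedge⟩
  obtain rfl : e = a.symm := ((dart_edge_eq_iff e a).1 hedge.symm).resolve_left
    fun h => hne (hda.trans (h ▸ hde.symm))
  have ha : Function.minimalPeriod E.facePerm a = 3 := by
    rw [← Paper.faceSize_eq_minimalPeriod, ← Paper.faceSize_eq_of_sameCycle E hda, h3]
  have hca : E.facePerm (E.facePerm (E.facePerm a)) = a := by
    simpa [ha, pow_succ] using Equiv.Perm.pow_minimalPeriod_apply E.facePerm a
  rw [Paper.faceSize_eq_of_sameCycle E hde, Paper.faceSize_eq_minimalPeriod]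
  exact Paper.ten_le_minimalPeriod_symm_of_triangle E h4 h7 h9 h53 hmin rfl rfl hca
    fun h => hne (hda.trans (h.trans hde.symm))

/-- Every face adjacent to a 3-face has boundary walk of length at least 10. -/
theorem statement15 {V : Type*} [Fintype V] (G : SimpleGraph V) [DecidableRel G.Adj]
    (hconn : G.Connected)
    (E : Paper.PlaneEmbedding G) (hE : E.IsPlane)
    (hmin : ∀ v : V, 3 ≤ G.degree v)
    (h4 : Paper.NoCycleLen G 4) (h7 : Paper.NoCycleLen G 7)
    (h9 : Paper.NoCycleLen G 9) (h53 : Paper.No5CycleNormAdj3 G) :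
    ∀ d1 d2 : G.Dart, Paper.faceSize E d1 = 3 → ¬ E.facePerm.SameCycle d1 d2 →
      Paper.FacesAdjacent E d1 d2 → 10 ≤ Paper.faceSize E d2 :=
  statement15_general G E hmin h4 h7 h9 h53
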